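/- Let G = (N, E) be a 2-connected finite simple graph and let e = (i,j) and ê = (w,z) be two distinct edges of G. Consider the multivariate polynomial in variables (x_a : a ∈ E) defined by f(x) = Σ_{F ∈ T({i,w},{j,z})} Π_{a ∈ F} x_a − Σ_{F ∈ T({i,z},{j,w})} Π_{a ∈ F} x_a. Then f is not the zero polynomial. -/

import Mathlib

open Finset

variable {V : Type*} [Fintype V] [DecidableEq V]

/-- `F` is the edge set of a spanning forest of `G` consisting of exactly two
vertex-disjoint trees that together cover all vertices of `G`, one tree containing
every vertex of `N₁` and the other containing every vertex of `N₂`. -/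
def IsTwoTreeForest (G : SimpleGraph V) (N₁ N₂ : Set V) (F : Finset (Sym2 V)) : Prop :=
  ↑F ⊆ G.edgeSet ∧
    (SimpleGraph.fromEdgeSet (↑F : Set (Sym2 V))).IsAcyclic ∧
    ∃ u v : V,
      ¬(SimpleGraph.fromEdgeSet (↑F : Set (Sym2 V))).Reachable u v ∧
      (∀ x : V, (SimpleGraph.fromEdgeSet (↑F : Set (Sym2 V))).Reachable x u ∨
        (SimpleGraph.fromEdgeSet (↑F : Set (Sym2 V))).Reachable x v) ∧
      (∀ x ∈ N₁, (SimpleGraph.fromEdgeSet (↑F : Set (Sym2 V))).Reachable x u) ∧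
      (∀ x ∈ N₂, (SimpleGraph.fromEdgeSet (↑F : Set (Sym2 V))).Reachable x v)

/-- The set `T(N₁, N₂)` of spanning forests of `G` consisting of exactly two trees,
one containing `N₁` and the other containing `N₂`, identified with their edge sets. -/
noncomputable def twoForests (G : SimpleGraph V) (N₁ N₂ : Set V) :
    Finset (Finset (Sym2 V)) :=
  letI := Classical.decPred (IsTwoTreeForest G N₁ N₂)
  Finset.univ.filter (IsTwoTreeForest G N₁ N₂)

/-- `G` is 2-connected: it is connected, has at least three vertices, and remains
connected after the deletion of any single vertex. -/
def TwoConnected (G : SimpleGraph V) : Prop :=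
  G.Connected ∧ 3 ≤ Fintype.card V ∧
    ∀ u : V, (G.induce ({u}ᶜ : Set V)).Connected

section Auxiliary

open SimpleGraph

set_option linter.unusedSectionVars false
set_option linter.unusedVariables false

variable {G : SimpleGraph V}


/-- Reachability within a vertex set `s`, as a relation on `V`. -/
def RW (G : SimpleGraph V) (s : Set V) (x y : V) : Prop :=
  x ∈ s ∧ y ∈ s ∧ ∃ p : G.Walk x y, ∀ v ∈ p.support, v ∈ s

lemma RW.refl {s : Set V} {x : V} (hx : x ∈ s) : RW G s x x :=
  ⟨hx, hx, Walk.nil, by simp [hx]⟩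

lemma RW.symm {s : Set V} {x y : V} (h : RW G s x y) : RW G s y x := by
  obtain ⟨hx, hy, p, hp⟩ := h
  exact ⟨hy, hx, p.reverse, by simpa using hp⟩

lemma RW.trans {s : Set V} {x y z : V} (h : RW G s x y) (h' : RW G s y z) : RW G s x z := by
  obtain ⟨hx, hy, p, hp⟩ := h
  obtain ⟨_, hz, q, hq⟩ := h'
  refine ⟨hx, hz, p.append q, fun v hv => ?_⟩
  rcases (Walk.mem_support_append_iff _ _).mp hv with h | h
  · exact hp v h
  · exact hq v h

lemma RW.mono {s t : Set V} (hst : s ⊆ t) {x y : V} (h : RW G s x y) : RW G t x y := by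
  obtain ⟨hx, hy, p, hp⟩ := h
  exact ⟨hst hx, hst hy, p, fun v hv => hst (hp v hv)⟩

lemma RW.of_adj {s : Set V} {x y : V} (h : G.Adj x y) (hx : x ∈ s) (hy : y ∈ s) :
    RW G s x y :=
  ⟨hx, hy, h.toWalk, by simp [hx, hy]⟩

lemma induce_reachable_of_walk {s : Set V} {x y : V} (p : G.Walk x y)
    (hp : ∀ v ∈ p.support, v ∈ s) :
    (G.induce s).Reachable ⟨x, hp x p.start_mem_support⟩ ⟨y, hp y p.end_mem_support⟩ := by
  induction p with
  | nil => rfl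
  | @cons a b c h q ih =>
      have hb : b ∈ s := hp b (by simp)
      have ha : a ∈ s := hp a (by simp)
      have ih' := ih (fun v hv => hp v (by simp [hv]))
      have step : (G.induce s).Reachable ⟨a, ha⟩ ⟨b, hb⟩ :=
        (Adj.reachable (by simpa using h))
      exact step.trans (by convert ih' using 2)

lemma reachable_induce_iff_RW {s : Set V} (x y : s) :
    (G.induce s).Reachable x y ↔ RW G s x y := by
  constructor
  · rintro ⟨p⟩
    refine ⟨x.2, y.2, p.map (Embedding.induce s).toHom, ?_⟩
    intro v hv
    erw [Walk.support_map, List.mem_map] at hv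
    obtain ⟨u, _, rfl⟩ := hv
    exact u.2
  · rintro ⟨hx, hy, p, hp⟩
    simpa using induce_reachable_of_walk p hp

lemma induce_connected_iff_RW {s : Set V} :
    (G.induce s).Connected ↔ s.Nonempty ∧ ∀ x ∈ s, ∀ y ∈ s, RW G s x y := by
  constructor
  · intro h
    obtain ⟨x0⟩ := h.nonempty
    refine ⟨⟨x0, x0.2⟩, fun x hx y hy => ?_⟩
    exact (reachable_induce_iff_RW ⟨x, hx⟩ ⟨y, hy⟩).mp (h.preconnected _ _)
  · rintro ⟨⟨x0, hx0⟩, h⟩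
    have : Nonempty s := ⟨⟨x0, hx0⟩⟩
    rw [connected_iff]
    refine ⟨fun a b => (reachable_induce_iff_RW a b).mpr (h a a.2 b b.2), this⟩

lemma exists_cross {s : Set V} {P : V → Prop} {x y : V} (h : RW G s x y) (hx : P x)
    (hy : ¬P y) : ∃ a b, G.Adj a b ∧ a ∈ s ∧ b ∈ s ∧ P a ∧ ¬P b := by
  obtain ⟨hxs, hys, p, hp⟩ := h
  clear hxs hys
  induction p with
  | nil => exact absurd hx hy
  | @cons a b c h q ih =>
      by_cases hb : P b
      · exact ih hb hy (fun v hv => hp v (by simp [hv]))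
      · exact ⟨a, b, h, hp a (by simp), hp b (by simp), hx, hb⟩
lemma isAcyclic_sup_edge {H : SimpleGraph V} (hH : H.IsAcyclic) {a b : V} (hab : a ≠ b)
    (hr : ¬H.Reachable a b) : (H ⊔ edge a b).IsAcyclic := by
  have hbridge : (H ⊔ edge a b).IsBridge s(a, b) := by
    rw [isBridge_iff]
    refine fun hreach => ?_
    refine hr (hreach.mono ?_)
    intro x y hxy
    simp only [deleteEdges, sdiff_adj, sup_adj] at hxy
    obtain ⟨h1 | h1, h2⟩ := hxy
    · exact h1
    · exfalso
      apply h2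
      rw [fromEdgeSet_adj]
      rw [edge_adj] at h1
      rcases h1.1 with ⟨rfl, rfl⟩ | ⟨rfl, rfl⟩
      · exact ⟨rfl, h1.2⟩
      · exact ⟨Sym2.eq_swap, h1.2⟩
  intro u c hc
  have hnotmem : s(a, b) ∉ c.edges :=
    hbridge.notMem_edges_of_isCycle hc
  have hsub : ∀ e ∈ c.edges, e ∈ H.edgeSet := by
    intro e he
    have := c.edges_subset_edgeSet he
    rw [edgeSet_sup] at this
    rcases this with h | h
    · exact h
    · rw [edge, edgeSet_fromEdgeSet] at h
      obtain ⟨h1, -⟩ := h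
      rw [Set.mem_singleton_iff] at h1
      exact absurd (h1 ▸ he) hnotmem
  exact hH (c.transfer H hsub) (hc.transfer hsub)

/-- edges of `F` all lie inside `s` -/
def EdgesIn (F : Finset (Sym2 V)) (s : Set V) : Prop := ∀ e ∈ F, ∀ x ∈ e, x ∈ s

lemma fromEdgeSet_reachable_mono {F F' : Finset (Sym2 V)} (h : F ⊆ F') {x y : V}
    (hr : (SimpleGraph.fromEdgeSet (↑F : Set (Sym2 V))).Reachable x y) :
    (SimpleGraph.fromEdgeSet (↑F' : Set (Sym2 V))).Reachable x y :=
  hr.mono (SimpleGraph.fromEdgeSet_mono (by exact_mod_cast h))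

/-- Every connected induced subgraph has a spanning forest (edge finset). -/
lemma exists_forest (G : SimpleGraph V) (A : Set V) (hA : (G.induce A).Connected) :
    ∃ F : Finset (Sym2 V), ↑F ⊆ G.edgeSet ∧ EdgesIn F A ∧
      (SimpleGraph.fromEdgeSet (↑F : Set (Sym2 V))).IsAcyclic ∧
      ∀ x ∈ A, ∀ y ∈ A, (SimpleGraph.fromEdgeSet (↑F : Set (Sym2 V))).Reachable x y := by
  classical
  set P : Finset (Sym2 V) → Prop := fun F => ↑F ⊆ G.edgeSet ∧ EdgesIn F A ∧
      (SimpleGraph.fromEdgeSet (↑F : Set (Sym2 V))).IsAcyclic with hP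
  have hPempty : P ∅ := by
    refine ⟨by simp, by simp [EdgesIn], by simp⟩
  obtain ⟨F, hF, hmax⟩ := Finset.exists_max_image (Finset.univ.filter P) Finset.card
    ⟨∅, Finset.mem_filter.mpr ⟨Finset.mem_univ _, hPempty⟩⟩
  rw [Finset.mem_filter] at hF
  obtain ⟨-, hF1, hF2, hF3⟩ := hF
  refine ⟨F, hF1, hF2, hF3, ?_⟩
  -- maximality: any G-edge inside A connects in F
  have step : ∀ x y : V, G.Adj x y → x ∈ A → y ∈ A →
      (SimpleGraph.fromEdgeSet (↑F : Set (Sym2 V))).Reachable x y := by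
    intro x y hxy hxA hyA
    by_contra hreach
    have hne' : s(x, y) ∉ F := by
      intro hmem
      exact hreach (SimpleGraph.Adj.reachable (by rw [fromEdgeSet_adj]; exact ⟨by exact_mod_cast hmem, hxy.ne⟩))
    have hP' : P (insert s(x, y) F) := by
      refine ⟨?_, ?_, ?_⟩
      · intro e he
        simp only [Finset.coe_insert, Set.mem_insert_iff] at he
        rcases he with rfl | he
        · exact hxy
        · exact hF1 he
      · intro e he v hv
        rcases Finset.mem_insert.mp he with rfl | he
        · rcases Sym2.mem_iff.mp hv with rfl | rfl
          · exact hxA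
          · exact hyA
        · exact hF2 e he v hv
      · have : (SimpleGraph.fromEdgeSet (↑(insert s(x,y) F) : Set (Sym2 V))) =
            SimpleGraph.fromEdgeSet (↑F : Set (Sym2 V)) ⊔ edge x y := by
          rw [Finset.coe_insert, Set.insert_eq, SimpleGraph.fromEdgeSet_union, edge]
          rw [sup_comm]
        rw [this]
        exact isAcyclic_sup_edge hF3 hxy.ne hreach
    have := hmax _ (Finset.mem_filter.mpr ⟨Finset.mem_univ _, hP'⟩)
    rw [Finset.card_insert_of_notMem hne'] at this
    omega
  -- now propagate along walks in induce A
  intro x hx y hy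
  have := (induce_connected_iff_RW.mp hA).2 x hx y hy
  obtain ⟨-, -, p, hp⟩ := this
  clear hx hy
  induction p with
  | nil => rfl
  | @cons a b c h q ih =>
      exact (step a b h (hp a (by simp)) (hp b (by simp))).trans
        (ih (fun v hv => hp v (by simp [hv])))
lemma walk_stays_left' {U FA FB : Finset (Sym2 V)} {A : Set V}
    (hU : ∀ e ∈ U, e ∈ FA ∨ e ∈ FB)
    (hFA : EdgesIn FA A) (hFB : EdgesIn FB Aᶜ) :
    ∀ {x y : V} (p : (SimpleGraph.fromEdgeSet (↑U : Set (Sym2 V))).Walk x y),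
      x ∈ A → (∀ e ∈ p.edges, e ∈ (SimpleGraph.fromEdgeSet (↑FA : Set (Sym2 V))).edgeSet)
        ∧ y ∈ A := by
  intro x y p
  induction p with
  | nil => exact fun hx => ⟨by simp, hx⟩
  | @cons a b c h q ih =>
      intro ha
      rw [SimpleGraph.fromEdgeSet_adj] at h
      obtain ⟨hmem, hne⟩ := h
      have hmem' : s(a, b) ∈ FA := by
        rcases hU _ (by exact_mod_cast hmem) with h | h
        · exact h
        · exact absurd ha (hFB _ h a (by simp))
      have hb : b ∈ A := hFA _ hmem' b (by simp)
      obtain ⟨ih1, ih2⟩ := ih hb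
      refine ⟨?_, ih2⟩
      intro e he
      rcases List.mem_cons.mp (by simpa using he) with rfl | he
      · rw [SimpleGraph.edgeSet_fromEdgeSet]
        exact ⟨by exact_mod_cast hmem', by simpa using hne⟩
      · exact ih1 e he

lemma walk_stays_left {FA FB : Finset (Sym2 V)} {A : Set V}
    (hFA : EdgesIn FA A) (hFB : EdgesIn FB Aᶜ) {x y : V}
    (p : (SimpleGraph.fromEdgeSet (↑(FA ∪ FB) : Set (Sym2 V))).Walk x y) (hx : x ∈ A) :
      (∀ e ∈ p.edges, e ∈ (SimpleGraph.fromEdgeSet (↑FA : Set (Sym2 V))).edgeSet)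
        ∧ y ∈ A :=
  walk_stays_left' (fun e he => Finset.mem_union.mp he) hFA hFB p hx

lemma not_reachable_across {FA FB : Finset (Sym2 V)} {A : Set V}
    (hFA : EdgesIn FA A) (hFB : EdgesIn FB Aᶜ) {x y : V} (hx : x ∈ A) (hy : y ∉ A) :
    ¬(SimpleGraph.fromEdgeSet (↑(FA ∪ FB) : Set (Sym2 V))).Reachable x y := by
  rintro ⟨p⟩
  exact hy (walk_stays_left hFA hFB p hx).2

lemma isAcyclic_union {FA FB : Finset (Sym2 V)} {A : Set V}
    (hFA : EdgesIn FA A) (hFB : EdgesIn FB Aᶜ)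
    (hA : (SimpleGraph.fromEdgeSet (↑FA : Set (Sym2 V))).IsAcyclic)
    (hB : (SimpleGraph.fromEdgeSet (↑FB : Set (Sym2 V))).IsAcyclic) :
    (SimpleGraph.fromEdgeSet (↑(FA ∪ FB) : Set (Sym2 V))).IsAcyclic := by
  intro u c hc
  by_cases hu : u ∈ A
  · have := (walk_stays_left hFA hFB c hu).1
    exact hA (c.transfer _ this) (hc.transfer this)
  · have hFA' : EdgesIn FA Aᶜᶜ := by rwa [compl_compl]
    have := (walk_stays_left' (fun e he => (Finset.mem_union.mp he).symm) hFB hFA' c (by exact hu)).1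
    exact hB (c.transfer _ this) (hc.transfer this)

lemma reach_in_union_left {FA FB : Finset (Sym2 V)} {x y : V}
    (h : (SimpleGraph.fromEdgeSet (↑FA : Set (Sym2 V))).Reachable x y) :
    (SimpleGraph.fromEdgeSet (↑(FA ∪ FB) : Set (Sym2 V))).Reachable x y :=
  fromEdgeSet_reachable_mono (Finset.subset_union_left) h

lemma reach_in_union_right {FA FB : Finset (Sym2 V)} {x y : V}
    (h : (SimpleGraph.fromEdgeSet (↑FB : Set (Sym2 V))).Reachable x y) :
    (SimpleGraph.fromEdgeSet (↑(FA ∪ FB) : Set (Sym2 V))).Reachable x y :=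
  fromEdgeSet_reachable_mono (Finset.subset_union_right) h

lemma isTwoTreeForest_of_partition (G : SimpleGraph V) {A : Set V} {N1 N2 : Set V}
    (hA : (G.induce A).Connected) (hB : (G.induce Aᶜ).Connected)
    (h1 : N1 ⊆ A) (h2 : N2 ⊆ Aᶜ) :
    ∃ F : Finset (Sym2 V), IsTwoTreeForest G N1 N2 F := by
  obtain ⟨FA, hFA1, hFA2, hFA3, hFA4⟩ := exists_forest G A hA
  obtain ⟨FB, hFB1, hFB2, hFB3, hFB4⟩ := exists_forest G Aᶜ hB
  obtain ⟨u, hu⟩ := (induce_connected_iff_RW.mp hA).1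
  obtain ⟨v, hv⟩ := (induce_connected_iff_RW.mp hB).1
  refine ⟨FA ∪ FB, ?_, isAcyclic_union hFA2 hFB2 hFA3 hFB3, u, v,
      not_reachable_across hFA2 hFB2 hu hv, ?_, ?_, ?_⟩
  · rw [Finset.coe_union]
    exact Set.union_subset hFA1 hFB1
  · intro x
    by_cases hx : x ∈ A
    · exact Or.inl (reach_in_union_left (hFA4 x hx u hu))
    · exact Or.inr (reach_in_union_right (hFB4 x hx v hv))
  · exact fun x hx => reach_in_union_left (hFA4 x (h1 hx) u hu)
  · exact fun x hx => reach_in_union_right (hFB4 x (h2 hx) v hv)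
lemma avoid {s : Set V} {t j : V} (h : RW G s t j) :
    ∃ p : G.Walk t j, ∀ v ∈ p.support, v ∈ s ∧ RW G s v j := by
  obtain ⟨ht, hj, p, hp⟩ := h
  exact ⟨p, fun v hv => ⟨hp v hv, ⟨hp v hv, hj, p.dropUntil v hv,
    fun u hu => hp u (Walk.support_dropUntil_subset p hv hu)⟩⟩⟩

lemma growth (G : SimpleGraph V) (h2v : ∀ u : V, (G.induce ({u}ᶜ : Set V)).Connected)
    {A : Set V} {j : V}
    (hA : (G.induce A).Connected) (hB : (G.induce Aᶜ).Connected) (hj : j ∈ Aᶜ)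
    (hBbig : (Aᶜ \ {j}).Nonempty) :
    ∃ x, x ∈ Aᶜ ∧ x ≠ j ∧ (G.induce (insert x A)).Connected ∧
      (G.induce (Aᶜ \ {x})).Connected := by
  classical
  set B := Aᶜ with hBdef
  set S : V → Prop := fun x => x ∈ B ∧ x ≠ j ∧ ∃ a ∈ A, G.Adj x a with hSdef
  set K : V → Set V := fun x => {y | y ∈ B ∧ y ≠ x ∧ ¬RW G (B \ {x}) y j} with hKdef
  have hjK : ∀ x, x ≠ j → j ∉ K x := by
    intro x hxj hmem
    exact hmem.2.2 (RW.refl ⟨hj, fun h => hxj ((Set.mem_singleton_iff.mp h).symm)⟩)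
  have notK_RW : ∀ x y, y ∈ B → y ≠ x → y ∉ K x → RW G (B \ {x}) y j := by
    intro x y hyB hyx hyK
    by_contra h'
    exact hyK ⟨hyB, hyx, h'⟩
  have avoidC : ∀ x c y, x ≠ j → c ∈ K x → y ∉ K x → y ∈ B → y ≠ x →
      RW G (B \ {c}) y j := by
    intro x c y hxj hcK hyK hyB hyx
    obtain ⟨p, hp⟩ := avoid (notK_RW x y hyB hyx hyK)
    have hsupp : ∀ v ∈ p.support, v ∈ B \ {c} := by
      intro v hv
      obtain ⟨⟨hvB, -⟩, hvRW⟩ := hp v hv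
      refine ⟨hvB, fun hvc => ?_⟩
      rw [Set.mem_singleton_iff] at hvc
      subst hvc
      exact hcK.2.2 hvRW
    exact ⟨hsupp _ p.start_mem_support, hsupp _ p.end_mem_support, p, hsupp⟩
  -- the main decreasing argument
  have main : ∀ n, ∀ x, S x → (K x).ncard ≤ n → ∃ x', S x' ∧ K x' = ∅ := by
    intro n
    induction n using Nat.strong_induction_on with
    | _ n ih =>
      intro x hx hcard
      by_cases hKx : K x = ∅
      · exact ⟨x, hx, hKx⟩
      obtain ⟨c₀, hc₀⟩ := Set.nonempty_iff_ne_empty.mpr hKx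
      obtain ⟨hxB, hxj, a₀, ha₀, hadj₀⟩ := hx
      have hRWx : RW G ({x}ᶜ : Set V) c₀ j :=
        (induce_connected_iff_RW.mp (h2v x)).2 c₀ (by simpa using hc₀.2.1) j
          (by simpa using fun h => hxj h.symm)
      obtain ⟨p, q, hpq, hpx, hqx, hpK, hqK⟩ :=
        exists_cross (P := (· ∈ K x)) hRWx hc₀ (hjK x hxj)
      have hpB : p ∈ B := hpK.1
      have hpxne : p ≠ x := hpK.2.1
      have hqA : q ∈ A := by
        by_contra hqA
        have hqB : q ∈ B := hqA
        have hqxne : q ≠ x := by simpa using hqx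
        have h1 : RW G (B \ {x}) q j := notK_RW x q hqB hqxne hqK
        have h2 : RW G (B \ {x}) p j :=
          (RW.of_adj (s := B \ {x}) hpq ⟨hpB, by simpa using hpxne⟩
            ⟨hqB, by simpa using hqxne⟩).trans h1
        exact hpK.2.2 h2
      have hpj : p ≠ j := fun h => (hjK x hxj) (h ▸ hpK)
      have hcS : S p := ⟨hpB, hpj, q, hqA, hpq⟩
      have hKsub : K p ⊆ K x \ {p} := by
        intro y hy
        have hyp : y ≠ p := hy.2.1
        refine ⟨?_, by simpa using hyp⟩
        by_contra hyKx
        by_cases hyx : y = x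
        · subst hyx
          -- construct RW G (B \ {p}) y j, contradiction with hy
          obtain ⟨-, -, p0, hp0⟩ := (induce_connected_iff_RW.mp hB).2 y hxB j hj
          have hbp : p0.bypass.support ⊆ p0.support := Walk.support_bypass_subset p0
          have hbpath : p0.bypass.IsPath := Walk.bypass_isPath p0
          cases hb : p0.bypass with
          | nil => exact hxj rfl
          | @cons _ t _ hadj q0 =>
            rw [hb] at hbp hbpath
            rw [Walk.cons_isPath_iff] at hbpath
            have hq0supp : ∀ v ∈ q0.support, v ∈ B \ {y} := by
              intro v hv
              refine ⟨hp0 v (hbp (by simp [hv])), fun hvy => ?_⟩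
              rw [Set.mem_singleton_iff] at hvy
              exact hbpath.2 (hvy ▸ hv)
            have htB : t ∈ B \ {y} := hq0supp t q0.start_mem_support
            have htK : t ∉ K y := by
              intro htK
              exact htK.2.2 ⟨htB, ⟨hj, by simpa using fun h => hxj h.symm⟩, q0, hq0supp⟩
            have htRW : RW G (B \ {p}) t j :=
              avoidC y p t hxj hpK htK htB.1 (by simpa using htB.2)
            have hyBp : y ∈ B \ {p} := ⟨hxB, by simpa using fun h => hpxne h.symm⟩
            have htBp : t ∈ B \ {p} := ⟨htB.1, fun h => htK (h ▸ hpK)⟩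
            exact hy.2.2 ((RW.of_adj hadj hyBp htBp).trans htRW)
        · have hyB : y ∈ B := hy.1
          exact hy.2.2 (avoidC x p y hxj hpK hyKx hyB hyx)
      have hKlt : (K p).ncard < (K x).ncard := by
        apply Set.ncard_lt_ncard _ (Set.toFinite _)
        refine ⟨hKsub.trans Set.diff_subset, fun hsup => ?_⟩
        have : p ∈ K p := hsup hpK
        exact this.2.1 rfl
      exact ih (K p).ncard (lt_of_lt_of_le hKlt hcard) p hcS le_rfl
  -- find a seed for S
  obtain ⟨a, ha⟩ := (induce_connected_iff_RW.mp hA).1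
  obtain ⟨b, hbB, hbj⟩ := hBbig
  have haj : a ≠ j := fun h => (h ▸ hj : a ∈ Aᶜ) ha
  have hRWj : RW G ({j}ᶜ : Set V) b a :=
    (induce_connected_iff_RW.mp (h2v j)).2 b (by simpa using hbj) a (by simpa using haj)
  obtain ⟨c, d, hcd, hcj, hdj, hcB, hdB⟩ :=
    exists_cross (P := (· ∈ B)) hRWj hbB (fun h => (h : a ∈ Aᶜ) ha)
  have hdA : d ∈ A := by simpa [hBdef] using hdB
  have hS₀ : S c := ⟨hcB, by simpa using hcj, d, hdA, hcd⟩
  obtain ⟨x, hxS, hxK⟩ := main (K c).ncard c hS₀ le_rfl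
  obtain ⟨hxB, hxj, a₀, ha₀, hadj₀⟩ := hxS
  refine ⟨x, hxB, hxj, ?_, ?_⟩
  · rw [induce_connected_iff_RW]
    refine ⟨⟨x, Set.mem_insert x A⟩, ?_⟩
    have base : ∀ p ∈ insert x A, RW G (insert x A) p a₀ := by
      intro p hp
      rcases Set.mem_insert_iff.mp hp with rfl | hpA
      · exact RW.of_adj hadj₀ (Set.mem_insert _ _) (Set.mem_insert_of_mem _ ha₀)
      · exact ((induce_connected_iff_RW.mp hA).2 p hpA a₀ ha₀).mono (Set.subset_insert _ _)
    exact fun p hp q hq => (base p hp).trans (base q hq).symm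
  · rw [induce_connected_iff_RW]
    have hjmem : j ∈ B \ {x} := ⟨hj, by simpa using fun h => hxj h.symm⟩
    refine ⟨⟨j, hjmem⟩, ?_⟩
    have base : ∀ y ∈ B \ {x}, RW G (B \ {x}) y j := by
      intro y hy
      refine notK_RW x y hy.1 (by simpa using hy.2) ?_
      rw [hxK]
      exact Set.notMem_empty y
    exact fun p hp q hq => (base p hp).trans (base q hq).symm
lemma induce_singleton_connected (G : SimpleGraph V) (v : V) :
    (G.induce ({v} : Set V)).Connected := by
  rw [induce_connected_iff_RW]
  refine ⟨⟨v, rfl⟩, ?_⟩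
  intro x hx y hy
  rw [Set.mem_singleton_iff] at hx hy
  subst hx; subst hy
  exact RW.refl rfl

lemma exists_partition (G : SimpleGraph V) (h2 : TwoConnected G)
    (i j w z : V) (hij : G.Adj i j) (hwz : G.Adj w z) (hne : s(i, j) ≠ s(w, z)) :
    ∃ A : Set V, i ∈ A ∧ j ∉ A ∧ (G.induce A).Connected ∧ (G.induce Aᶜ).Connected ∧
      ((w ∈ A ∧ z ∉ A) ∨ (z ∈ A ∧ w ∉ A)) := by
  classical
  obtain ⟨-, -, h2v⟩ := h2
  have hijne := hij.ne
  have hwzne := hwz.ne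
  by_cases hiw : i = w
  · subst hiw
    have hjz : j ≠ z := fun h => hne (by rw [h])
    refine ⟨{i}, rfl, by simpa using hijne.symm, induce_singleton_connected G i,
      by simpa using h2v i, Or.inl ⟨rfl, by simpa using fun h => hwzne h.symm⟩⟩
  by_cases hiz : i = z
  · subst hiz
    refine ⟨{i}, rfl, by simpa using hijne.symm, induce_singleton_connected G i,
      by simpa using h2v i, Or.inr ⟨rfl, by simpa using hwzne⟩⟩
  by_cases hjw : j = w
  · subst hjw
    refine ⟨{j}ᶜ, by simpa using hijne, by simp, h2v j, ?_, Or.inr ⟨?_, ?_⟩⟩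
    · rw [compl_compl]
      exact induce_singleton_connected G j
    · simpa using fun h => hwzne h.symm
    · simp
  by_cases hjz : j = z
  · subst hjz
    refine ⟨{j}ᶜ, by simpa using hijne, by simp, h2v j, ?_, Or.inl ⟨?_, ?_⟩⟩
    · rw [compl_compl]
      exact induce_singleton_connected G j
    · simpa using hwzne
    · simp
  -- generic case: i, j, w, z with {i,j} ∩ {w,z} = ∅
  set P : Finset V → Prop := fun A => i ∈ A ∧ j ∉ A ∧ (G.induce (↑A : Set V)).Connected ∧
    (G.induce ((↑A : Set V)ᶜ)).Connected ∧ w ∉ A ∧ z ∉ A with hPdef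
  have hPseed : P {i} := by
    refine ⟨Finset.mem_singleton_self i, by simpa using fun h => hijne h.symm, ?_, ?_, ?_, ?_⟩
    · rw [Finset.coe_singleton]
      exact induce_singleton_connected G i
    · rw [Finset.coe_singleton]
      exact h2v i
    · simpa using fun h => hiw h.symm
    · simpa using fun h => hiz h.symm
  obtain ⟨A, hA, hmax⟩ := Finset.exists_max_image (Finset.univ.filter P) Finset.card
    ⟨{i}, Finset.mem_filter.mpr ⟨Finset.mem_univ _, hPseed⟩⟩
  rw [Finset.mem_filter] at hA
  obtain ⟨-, hiA, hjA, hconnA, hconnB, hwA, hzA⟩ := hA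
  have hjB : j ∈ (↑A : Set V)ᶜ := by simpa using hjA
  have hBbig : ((↑A : Set V)ᶜ \ {j}).Nonempty :=
    ⟨w, ⟨by simpa using hwA, by simpa using fun (h : w = j) => hjw h.symm⟩⟩
  obtain ⟨x, hxB, hxj, hconn1, hconn2⟩ := growth G h2v hconnA hconnB hjB hBbig
  have hxA : x ∉ A := by simpa using hxB
  have hcoe : ((insert x A : Finset V) : Set V) = insert x (↑A : Set V) := by
    simp
  have hcompl : (insert x (↑A : Set V))ᶜ = (↑A : Set V)ᶜ \ {x} := by
    ext v; simp [Set.mem_insert_iff, not_or, and_comm]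
  have hP' : ¬P (insert x A) := by
    intro hP'
    have := hmax _ (Finset.mem_filter.mpr ⟨Finset.mem_univ _, hP'⟩)
    rw [Finset.card_insert_of_notMem hxA] at this
    omega
  have h5 : ¬(w ∉ insert x A ∧ z ∉ insert x A) := by
    rintro ⟨h5a, h5b⟩
    refine hP' ⟨Finset.mem_insert_of_mem hiA, ?_, ?_, ?_, h5a, h5b⟩
    · rw [Finset.mem_insert]
      rintro (h | h)
      · exact hxj h.symm
      · exact hjA h
    · rw [hcoe]; exact hconn1
    · rw [hcoe, hcompl]; exact hconn2
  have hwzx : w = x ∨ z = x := by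
    by_contra hc
    push_neg at hc
    refine h5 ⟨?_, ?_⟩
    · rw [Finset.mem_insert]; rintro (h | h); exacts [hc.1 h, hwA h]
    · rw [Finset.mem_insert]; rintro (h | h); exacts [hc.2 h, hzA h]
  refine ⟨(↑(insert x A) : Set V), ?_, ?_, by rw [hcoe]; exact hconn1,
    by rw [hcoe, hcompl]; exact hconn2, ?_⟩
  · exact Finset.mem_coe.mpr (Finset.mem_insert_of_mem hiA)
  · rw [Finset.mem_coe, Finset.mem_insert]
    rintro (h | h)
    · exact hxj h.symm
    · exact hjA h
  · rcases hwzx with rfl | rfl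
    · refine Or.inl ⟨Finset.mem_coe.mpr (Finset.mem_insert_self _ _), ?_⟩
      rw [Finset.mem_coe, Finset.mem_insert]
      rintro (h | h)
      · exact hwzne h.symm
      · exact hzA h
    · refine Or.inr ⟨Finset.mem_coe.mpr (Finset.mem_insert_self _ _), ?_⟩
      rw [Finset.mem_coe, Finset.mem_insert]
      rintro (h | h)
      · exact hwzne h
      · exact hwA h
section Poly
variable {σ : Type*} [DecidableEq σ]

lemma prod_X_eq_monomial' (F : Finset σ) :
    (∏ a ∈ F, (MvPolynomial.X a : MvPolynomial σ ℝ)) =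
      MvPolynomial.monomial (∑ a ∈ F, Finsupp.single a 1) 1 := by
  classical
  induction F using Finset.induction with
  | empty => simp
  | @insert a F ha ih =>
      rw [Finset.prod_insert ha, Finset.sum_insert ha, ih, MvPolynomial.X,
        MvPolynomial.monomial_mul, one_mul]

lemma exps_injective (F F' : Finset σ)
    (h : (∑ a ∈ F, Finsupp.single a 1) = ∑ a ∈ F', Finsupp.single a (1 : ℕ)) : F = F' := by
  classical
  ext b
  have := DFunLike.congr_fun h b
  simp only [Finsupp.coe_finset_sum, Finset.sum_apply, Finsupp.single_apply] at this
  rw [Finset.sum_ite_eq' F b (fun _ => 1), Finset.sum_ite_eq' F' b (fun _ => 1)] at this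
  by_cases hb : b ∈ F <;> by_cases hb' : b ∈ F' <;> simp [hb, hb'] at this ⊢

lemma sub_sums_ne_zero (S1 S2 : Finset (Finset σ)) (hdisj : ∀ F, ¬(F ∈ S1 ∧ F ∈ S2))
    (hne : S1.Nonempty ∨ S2.Nonempty) :
    (∑ F ∈ S1, ∏ a ∈ F, MvPolynomial.X a) -
      (∑ F ∈ S2, ∏ a ∈ F, (MvPolynomial.X a : MvPolynomial σ ℝ)) ≠ 0 := by
  classical
  -- wlog: find F0 in S1 ∪ S2
  intro hzero
  rw [sub_eq_zero] at hzero
  obtain ⟨F0, hF0⟩ : ∃ F0, (F0 ∈ S1 ∧ F0 ∉ S2) ∨ (F0 ∈ S2 ∧ F0 ∉ S1) := by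
    rcases hne with ⟨F0, h⟩ | ⟨F0, h⟩
    · exact ⟨F0, Or.inl ⟨h, fun hc => hdisj F0 ⟨h, hc⟩⟩⟩
    · exact ⟨F0, Or.inr ⟨h, fun hc => hdisj F0 ⟨hc, h⟩⟩⟩
  have key : ∀ (S : Finset (Finset σ)),
      MvPolynomial.coeff (∑ a ∈ F0, Finsupp.single a 1)
        (∑ F ∈ S, ∏ a ∈ F, (MvPolynomial.X a : MvPolynomial σ ℝ)) =
        if F0 ∈ S then 1 else 0 := by
    intro S
    rw [MvPolynomial.coeff_sum]
    have : ∀ F ∈ S, MvPolynomial.coeff (∑ a ∈ F0, Finsupp.single a 1)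
        (∏ a ∈ F, (MvPolynomial.X a : MvPolynomial σ ℝ)) = if F = F0 then 1 else 0 := by
      intro F _
      rw [prod_X_eq_monomial', MvPolynomial.coeff_monomial]
      by_cases h : F = F0
      · simp [h]
      · have : ¬((∑ a ∈ F, Finsupp.single a 1) = ∑ a ∈ F0, Finsupp.single a (1:ℕ)) :=
          fun hc => h (exps_injective _ _ hc)
        simp [h, this]
    rw [Finset.sum_congr rfl this, Finset.sum_ite_eq' S F0 (fun _ => (1:ℝ))]
  have h1 := key S1
  have h2 := key S2
  rw [hzero, h2] at h1
  rcases hF0 with ⟨hin, hout⟩ | ⟨hin, hout⟩ <;> simp [hin, hout] at h1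

end Poly
lemma mem_twoForests {G : SimpleGraph V} {N₁ N₂ : Set V} {F : Finset (Sym2 V)} :
    F ∈ twoForests G N₁ N₂ ↔ IsTwoTreeForest G N₁ N₂ F := by
  classical
  rw [twoForests]
  rw [Finset.mem_filter]
  simp

lemma twoForests_disjoint (G : SimpleGraph V) (i j w z : V) :
    ∀ F, ¬(F ∈ twoForests G {i, w} {j, z} ∧ F ∈ twoForests G {i, z} {j, w}) := by
  rintro F ⟨h1, h2⟩
  rw [mem_twoForests] at h1 h2
  obtain ⟨-, -, u, v, huv, -, hN1, hN2⟩ := h1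
  obtain ⟨-, -, u', v', -, -, hN1', hN2'⟩ := h2
  have hi : _ := hN1 i (Set.mem_insert _ _)
  have hw : _ := hN1 w (Set.mem_insert_of_mem _ rfl)
  have hj : _ := hN2 j (Set.mem_insert _ _)
  have hz : _ := hN2 z (Set.mem_insert_of_mem _ rfl)
  have hi' : _ := hN1' i (Set.mem_insert _ _)
  have hz' : _ := hN1' z (Set.mem_insert_of_mem _ rfl)
  have hj' : _ := hN2' j (Set.mem_insert _ _)
  have hw' : _ := hN2' w (Set.mem_insert_of_mem _ rfl)
  -- R i w, R w j, hence R i j, hence R u v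
  exact huv ((hi.symm.trans ((hi.trans hw.symm).trans (hw'.trans hj'.symm))).trans hj)


end Auxiliary

/-- Let `G` be a 2-connected finite simple graph and `e = (i, j)`,
`ê = (w, z)` two distinct edges of `G`. The polynomial
`f(x) = Σ_{F ∈ T({i,w},{j,z})} Π_{a ∈ F} x_a − Σ_{F ∈ T({i,z},{j,w})} Π_{a ∈ F} x_a`
(in the multivariate polynomial ring over `ℝ` with one variable per edge) is not the
zero polynomial. -/
theorem forest_polynomial_ne_zero (G : SimpleGraph V) (h2 : TwoConnected G)
    (i j w z : V) (hij : G.Adj i j) (hwz : G.Adj w z) (hne : s(i, j) ≠ s(w, z)) :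
    (∑ F ∈ twoForests G {i, w} {j, z}, ∏ a ∈ F, MvPolynomial.X a) -
        (∑ F ∈ twoForests G {i, z} {j, w}, ∏ a ∈ F,
          (MvPolynomial.X a : MvPolynomial (Sym2 V) ℝ)) ≠ 0 := by
  apply sub_sums_ne_zero _ _ (twoForests_disjoint G i j w z)
  obtain ⟨A, hiA, hjA, hconnA, hconnB, hcase⟩ := exists_partition G h2 i j w z hij hwz hne
  rcases hcase with ⟨hwA, hzA⟩ | ⟨hzA, hwA⟩
  · left
    obtain ⟨F, hF⟩ := isTwoTreeForest_of_partition G hconnA hconnB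
      (N1 := {i, w}) (N2 := {j, z})
      (by rintro x (rfl | rfl); exacts [hiA, hwA])
      (by rintro x (rfl | rfl); exacts [hjA, hzA])
    exact ⟨F, mem_twoForests.mpr hF⟩
  · right
    obtain ⟨F, hF⟩ := isTwoTreeForest_of_partition G hconnA hconnB
      (N1 := {i, z}) (N2 := {j, w})
      (by rintro x (rfl | rfl); exacts [hiA, hzA])
      (by rintro x (rfl | rfl); exacts [hjA, hwA])
    exact ⟨F, mem_twoForests.mpr hF⟩
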